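/- arXiv:2506.11891 — 4 statements merged into one kernel-verified Lean document; each statement's English description precedes it below -/
import Mathlib

section
/- For every Haar wavelet ψ_{j,k} on [0,1] and every ε > 0, there exist three functions of the form g_i(s) = B_i · exp(−λ_i ∫_s^1 softplus(w_i r + b_i) dr) (with real parameters B_i, λ_i ≥ 0, w_i, b_i) such that |ψ_{j,k}(s) − (g_1(s) + g_3(s) − 2 g_2(s))| < ε for all s ∈ [0,1] at distance at least ε from the three breakpoints 2^{−j}k, 2^{−j}k + 2^{−(j+1)}, 2^{−j}(k+1). -/
open Filter MeasureTheory

noncomputable def softplus (x : ℝ) : ℝ := Real.log (1 + Real.exp x)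

noncomputable def haarMother (s : ℝ) : ℝ :=
  (if s ∈ Set.Ico (0:ℝ) (1/2) then (1:ℝ) else 0) -
  (if s ∈ Set.Icc (1/2:ℝ) 1 then (1:ℝ) else 0)

noncomputable def haar (j k : ℕ) (s : ℝ) : ℝ :=
  (2:ℝ) ^ ((j:ℝ)/2) * haarMother ((2:ℝ)^(j:ℕ) * s - k)

/-- Mamba basis function with time positional encoding. -/
noncomputable def mambaBasis (B lam w b : ℝ) (s : ℝ) : ℝ :=
  B * Real.exp (-(lam * ∫ r in s..(1:ℝ), softplus (w * r + b)))

/-!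
Each `mambaBasis A 1 (-M) (M * c)` is `A * exp (-F)` with `F s = ∫ r in s..1, softplus (M * (c - r))`.
For large `M` the integrand is `≈ M (c - r)` left of `c` and exponentially small right of `c`,
so `F s` is large for `s < c` and tiny for `s > c`: the basis function is a smoothed step of
height `A` at `c`, uniformly away from `c`. The Haar wavelet is the combination
`A (H(s - c₁) - 2 H(s - c₂) + H(s - c₃))` of steps at its three breakpoints.
-/

open Set Real Topology

lemma softplus_nonneg (x : ℝ) : 0 ≤ softplus x :=
  log_nonneg (by linarith [exp_pos x])

lemma self_le_softplus (x : ℝ) : x ≤ softplus x := by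
  calc x = log (exp x) := (log_exp x).symm
    _ ≤ softplus x := log_le_log (exp_pos x) (by linarith)

lemma softplus_le_exp (x : ℝ) : softplus x ≤ exp x := by
  have := log_le_sub_one_of_pos (by positivity : 0 < 1 + exp x)
  unfold softplus
  linarith

lemma continuous_softplus : Continuous softplus :=
  (continuous_const.add continuous_exp).log fun x => (by positivity : 0 < 1 + exp x).ne'

noncomputable def heaviside (x : ℝ) : ℝ := if 0 ≤ x then 1 else 0

section SmoothStep

variable {M c ε s : ℝ}

lemma intervalIntegrable_softplus_affine (w b u v : ℝ) :
    IntervalIntegrable (fun r => softplus (w * r + b)) volume u v :=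
  (continuous_softplus.comp (by fun_prop)).intervalIntegrable u v

lemma integral_softplus_ramp_nonneg (hs : s ≤ 1) :
    0 ≤ ∫ r in s..1, softplus (-M * r + M * c) :=
  intervalIntegral.integral_nonneg hs fun _ _ => softplus_nonneg _

/-- Left of the step, the integral contains `[c - ε, c - ε / 2]`, where the integrand is at
least `M ε / 2`. -/
lemma mul_le_integral_softplus_ramp (hM : 0 ≤ M) (hε : 0 < ε) (hc : c ≤ 1) (hs : s ≤ c - ε) :
    M * (ε ^ 2 / 4) ≤ ∫ r in s..1, softplus (-M * r + M * c) := by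
  calc M * (ε ^ 2 / 4) = ∫ _ in (c - ε)..(c - ε / 2), M * ε / 2 := by
        rw [intervalIntegral.integral_const, smul_eq_mul]; ring
    _ ≤ ∫ r in (c - ε)..(c - ε / 2), softplus (-M * r + M * c) := by
        refine intervalIntegral.integral_mono_on (by linarith) intervalIntegrable_const
          (intervalIntegrable_softplus_affine _ _ _ _) fun r hr => ?_
        have : M * ε / 2 ≤ -M * r + M * c := by nlinarith [hr.2]
        exact this.trans (self_le_softplus _)
    _ ≤ ∫ r in s..1, softplus (-M * r + M * c) :=
        intervalIntegral.integral_mono_interval hs (by linarith) (by linarith)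
          (.of_forall fun _ => softplus_nonneg _) (intervalIntegrable_softplus_affine _ _ _ _)

lemma integral_softplus_ramp_le_exp (hM : 0 ≤ M) (hs : s ∈ Icc 0 1) (hsc : c + ε ≤ s) :
    ∫ r in s..1, softplus (-M * r + M * c) ≤ exp (-(M * ε)) := by
  calc ∫ r in s..1, softplus (-M * r + M * c) ≤ ∫ _ in s..1, exp (-(M * ε)) := by
        refine intervalIntegral.integral_mono_on hs.2 (intervalIntegrable_softplus_affine _ _ _ _)
          intervalIntegrable_const fun r hr => (softplus_le_exp _).trans ?_
        exact exp_le_exp.mpr (by nlinarith [hr.1])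
    _ = (1 - s) * exp (-(M * ε)) := by rw [intervalIntegral.integral_const, smul_eq_mul]
    _ ≤ exp (-(M * ε)) := mul_le_of_le_one_left (exp_pos _).le (by linarith [hs.1])

lemma abs_exp_neg_integral_softplus_ramp_sub_heaviside_le (hM : 0 ≤ M) (hε : 0 < ε) (hc : c ≤ 1)
    (hs : s ∈ Icc 0 1) (hsc : ε ≤ |s - c|) :
    |exp (-∫ r in s..1, softplus (-M * r + M * c)) - heaviside (s - c)| ≤
      exp (-(M * (ε ^ 2 / 4))) + exp (-(M * ε)) := by
  set F := ∫ r in s..1, softplus (-M * r + M * c)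
  have hF : 0 ≤ F := integral_softplus_ramp_nonneg hs.2
  rcases le_abs'.mp hsc with hleft | hright
  · have hFlow := mul_le_integral_softplus_ramp hM hε hc (by linarith : s ≤ c - ε)
    rw [heaviside, if_neg (by linarith), sub_zero, abs_of_pos (exp_pos _)]
    linarith [exp_le_exp.mpr (neg_le_neg hFlow), exp_pos (-(M * ε))]
  · have hFup := integral_softplus_ramp_le_exp hM hs (by linarith : c + ε ≤ s)
    rw [heaviside, if_pos (by linarith), abs_sub_comm,
      abs_of_nonneg (by linarith [exp_le_one_iff.mpr (neg_nonpos.mpr hF)])]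
    linarith [add_one_le_exp (-F), exp_pos (-(M * (ε ^ 2 / 4)))]

end SmoothStep

lemma tendsto_exp_neg_mul_atTop {κ : ℝ} (hκ : 0 < κ) :
    Tendsto (fun M => exp (-(M * κ))) atTop (𝓝 0) :=
  tendsto_exp_neg_atTop_nhds_zero.comp (tendsto_id.atTop_mul_const hκ)

theorem exists_mambaBasis_near_heaviside (A : ℝ) {δ ε : ℝ} (hδ : 0 < δ) (hε : 0 < ε) :
    ∃ M : ℝ, ∀ c ≤ 1, ∀ s ∈ Icc (0 : ℝ) 1, ε ≤ |s - c| →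
      |mambaBasis A 1 (-M) (M * c) s - A * heaviside (s - c)| ≤ δ := by
  have hlim : Tendsto (fun M => |A| * (exp (-(M * (ε ^ 2 / 4))) + exp (-(M * ε)))) atTop
      (𝓝 0) := by
    simpa using ((tendsto_exp_neg_mul_atTop (by positivity)).add
      (tendsto_exp_neg_mul_atTop hε)).const_mul |A|
  obtain ⟨M, hMδ, hM⟩ :=
    ((hlim.eventually (ge_mem_nhds hδ)).and (eventually_ge_atTop 0)).exists
  refine ⟨M, fun c hc s hs hsc => ?_⟩
  rw [mambaBasis, one_mul, ← mul_sub, abs_mul]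
  exact (mul_le_mul_of_nonneg_left
    (abs_exp_neg_integral_softplus_ramp_sub_heaviside_le hM hε hc hs hsc) (abs_nonneg A)).trans hMδ

lemma heaviside_mul_of_pos {a : ℝ} (ha : 0 < a) (x : ℝ) : heaviside (a * x) = heaviside x := by
  simp only [heaviside, mul_nonneg_iff_of_pos_left ha]

lemma haarMother_eq_heaviside {t : ℝ} (ht : t ≠ 1) :
    haarMother t = heaviside t - 2 * heaviside (t - 1 / 2) + heaviside (t - 1) := by
  simp only [haarMother, heaviside, mem_Ico, mem_Icc, sub_nonneg]
  split_ifs <;> grind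

lemma two_rpow_neg_natCast (j : ℕ) : (2 : ℝ) ^ (-(j : ℝ)) = ((2 : ℝ) ^ j)⁻¹ := by
  rw [rpow_neg zero_le_two, rpow_natCast]

lemma two_rpow_neg_natCast_add_one (j : ℕ) :
    (2 : ℝ) ^ (-((j : ℝ) + 1)) = ((2 : ℝ) ^ j)⁻¹ / 2 := by
  rw [neg_add, rpow_add two_pos, two_rpow_neg_natCast, rpow_neg_one, div_eq_mul_inv]

section HaarBreakpoints

variable {j : ℕ}

lemma haar_breakpoints_le_one {k : ℕ} (hk : k ≤ 2 ^ j - 1) :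
    (2 : ℝ) ^ (-(j : ℝ)) * k ≤ 1 ∧
      (2 : ℝ) ^ (-(j : ℝ)) * k + (2 : ℝ) ^ (-((j : ℝ) + 1)) ≤ 1 ∧
      (2 : ℝ) ^ (-(j : ℝ)) * (k + 1) ≤ 1 := by
  have hkP : (k : ℝ) + 1 ≤ 2 ^ j := by
    exact_mod_cast (by have := j.one_le_two_pow; omega : k + 1 ≤ 2 ^ j)
  rw [two_rpow_neg_natCast_add_one, two_rpow_neg_natCast]
  refine ⟨?_, ?_, ?_⟩ <;>
  · field_simp
    linarith

/-- The identity fails only at the right endpoint `s = 2⁻ʲ (k + 1)`, where `haarMother` is `-1`. -/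
lemma haar_eq_heaviside (k : ℕ) {s : ℝ} (hs : s ≠ (2 : ℝ) ^ (-(j : ℝ)) * (k + 1)) :
    haar j k s = (2 : ℝ) ^ ((j : ℝ) / 2) *
      (heaviside (s - (2 : ℝ) ^ (-(j : ℝ)) * k) -
        2 * heaviside (s - ((2 : ℝ) ^ (-(j : ℝ)) * k + (2 : ℝ) ^ (-((j : ℝ) + 1)))) +
        heaviside (s - (2 : ℝ) ^ (-(j : ℝ)) * (k + 1))) := by
  have hP : (0 : ℝ) < 2 ^ j := by positivity
  rw [two_rpow_neg_natCast_add_one, two_rpow_neg_natCast] at *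
  have ht : (2 : ℝ) ^ j * s - k ≠ 1 := by
    contrapose! hs
    field_simp
    linarith
  have h_shift : ∀ c a : ℝ, (2 : ℝ) ^ j * c = k + a →
      heaviside (s - c) = heaviside ((2 : ℝ) ^ j * s - k - a) := fun c a hc => by
    rw [← heaviside_mul_of_pos hP, mul_sub, hc, sub_sub]
  rw [haar, haarMother_eq_heaviside ht,
    h_shift ((2 ^ j)⁻¹ * k) 0 (by field_simp; ring), sub_zero,
    h_shift ((2 ^ j)⁻¹ * k + (2 ^ j)⁻¹ / 2) (1 / 2) (by field_simp),
    h_shift ((2 ^ j)⁻¹ * (k + 1)) 1 (by field_simp)]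

end HaarBreakpoints

theorem stmt3 (j k : ℕ) (hk : k ≤ 2^j - 1) (ε : ℝ) (hε : 0 < ε) :
    ∃ B₁ B₂ B₃ lam₁ lam₂ lam₃ w₁ w₂ w₃ b₁ b₂ b₃ : ℝ,
      0 ≤ lam₁ ∧ 0 ≤ lam₂ ∧ 0 ≤ lam₃ ∧
      ∀ s ∈ Set.Icc (0:ℝ) 1,
        ε ≤ |s - (2:ℝ)^(-(j:ℝ)) * k| →
        ε ≤ |s - ((2:ℝ)^(-(j:ℝ)) * k + (2:ℝ)^(-((j:ℝ)+1)))| →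
        ε ≤ |s - (2:ℝ)^(-(j:ℝ)) * (k+1)| →
        |haar j k s -
          (mambaBasis B₁ lam₁ w₁ b₁ s + mambaBasis B₃ lam₃ w₃ b₃ s -
            2 * mambaBasis B₂ lam₂ w₂ b₂ s)| < ε := by
  set A := (2 : ℝ) ^ ((j : ℝ) / 2)
  set c₁ := (2 : ℝ) ^ (-(j : ℝ)) * k
  set c₂ := (2 : ℝ) ^ (-(j : ℝ)) * k + (2 : ℝ) ^ (-((j : ℝ) + 1))
  set c₃ := (2 : ℝ) ^ (-(j : ℝ)) * (k + 1)
  obtain ⟨hc₁, hc₂, hc₃⟩ := haar_breakpoints_le_one hk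
  obtain ⟨M, hM⟩ := exists_mambaBasis_near_heaviside A (by positivity : 0 < ε / 5) hε
  refine ⟨A, A, A, 1, 1, 1, -M, -M, -M, M * c₁, M * c₂, M * c₃,
    zero_le_one, zero_le_one, zero_le_one, fun s hs h₁ h₂ h₃ => ?_⟩
  have hs₃ : s ≠ c₃ := by
    rintro rfl
    rw [sub_self, abs_zero] at h₃
    linarith
  have e₁ := abs_le.mp (hM c₁ hc₁ s hs h₁)
  have e₂ := abs_le.mp (hM c₂ hc₂ s hs h₂)
  have e₃ := abs_le.mp (hM c₃ hc₃ s hs h₃)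
  rw [haar_eq_heaviside k hs₃, abs_lt]
  constructor <;> linarith
end

section
/- Consider the Mamba-type recurrence h_t = Σ_{s=1}^t e^{−λ Σ_{r=s+1}^t Δ(x_r)} B(x_s) Δ(x_s) x_s where λ > 0 and Δ(x) ≥ 0, B(x) are differentiable functions of a scalar input. Fix j and suppose x_r for all r ≠ j are held fixed. Then |∂h_t/∂x_j| ≤ c̃ · e^{−λ Σ_{r=j+1}^t Δ(x_r)}, where c̃ depends only on λ, the functions Δ, B, and the inputs x_1,…,x_j (not on t). -/
theorem stmt10 (lam : ℝ) (hlam : 0 < lam) (Δ B : ℝ → ℝ) (hΔ : Differentiable ℝ Δ)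
    (hB : Differentiable ℝ B) (hΔpos : ∀ z, 0 ≤ Δ z) (x : ℕ → ℝ) (j : ℕ) (hj : 1 ≤ j) :
    ∃ c : ℝ, ∀ t : ℕ, j ≤ t →
      |deriv (fun y : ℝ =>
          ∑ s ∈ Finset.Icc 1 t,
            Real.exp (-lam * ∑ r ∈ Finset.Icc (s+1) t, Δ (if r = j then y else x r)) *
              B (if s = j then y else x s) * Δ (if s = j then y else x s) *
              (if s = j then y else x s)) (x j)|
        ≤ c * Real.exp (-lam * ∑ r ∈ Finset.Icc (j+1) t, Δ (x r)) := by
  set g : ℝ → ℝ := fun y =>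
    ∑ s ∈ Finset.Icc 1 j,
      Real.exp (-lam * ∑ r ∈ Finset.Icc (s+1) j, Δ (if r = j then y else x r)) *
        B (if s = j then y else x s) * Δ (if s = j then y else x s) *
        (if s = j then y else x s) with hg
  refine ⟨|deriv g (x j)|, fun t ht => ?_⟩
  set E : ℝ := Real.exp (-lam * ∑ r ∈ Finset.Icc (j+1) t, Δ (x r)) with hE
  set C : ℝ := ∑ s ∈ Finset.Icc (j+1) t,
      Real.exp (-lam * ∑ r ∈ Finset.Icc (s+1) t, Δ (x r)) * B (x s) * Δ (x s) * x s with hC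
  have key : ∀ y : ℝ,
      (∑ s ∈ Finset.Icc 1 t,
        Real.exp (-lam * ∑ r ∈ Finset.Icc (s+1) t, Δ (if r = j then y else x r)) *
          B (if s = j then y else x s) * Δ (if s = j then y else x s) *
          (if s = j then y else x s)) = E * g y + C := by
    intro y
    have e1 : Finset.Icc 1 t = Finset.Ioc 0 t := Finset.Icc_add_one_left_eq_Ioc 0 t
    have e2 : Finset.Icc 1 j = Finset.Ioc 0 j := Finset.Icc_add_one_left_eq_Ioc 0 j
    have e3 : ∀ a b : ℕ, Finset.Icc (a+1) b = Finset.Ioc a b := fun a b =>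
      Finset.Icc_add_one_left_eq_Ioc a b
    rw [e1, ← Finset.sum_Ioc_consecutive _ (Nat.zero_le j) ht]
    congr 1
    · rw [hg]
      simp only
      rw [e2, Finset.mul_sum]
      refine Finset.sum_congr rfl (fun s hs => ?_)
      have hsj : s ≤ j := (Finset.mem_Ioc.mp hs).2
      rw [e3 s t, e3 s j, ← Finset.sum_Ioc_consecutive _ hsj ht]
      have h4 : ∑ r ∈ Finset.Ioc j t, Δ (if r = j then y else x r)
          = ∑ r ∈ Finset.Icc (j+1) t, Δ (x r) := by
        rw [e3 j t]
        refine Finset.sum_congr rfl (fun r hr => ?_)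
        have : r ≠ j := Nat.ne_of_gt (Finset.mem_Ioc.mp hr).1
        simp [this]
      rw [h4, mul_add, Real.exp_add, hE]
      ring
    · rw [hC, e3 j t]
      refine Finset.sum_congr rfl (fun s hs => ?_)
      have hjs : j < s := (Finset.mem_Ioc.mp hs).1
      have hsne : s ≠ j := Nat.ne_of_gt hjs
      have hinner : ∑ r ∈ Finset.Icc (s+1) t, Δ (if r = j then y else x r)
          = ∑ r ∈ Finset.Icc (s+1) t, Δ (x r) := by
        refine Finset.sum_congr rfl (fun r hr => ?_)
        have : r ≠ j := by
          have := (Finset.mem_Icc.mp hr).1; omega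
        simp [this]
      rw [e3 s t] at hinner ⊢
      rw [hinner]
      simp [hsne]
  have hEpos : 0 < E := by rw [hE]; exact Real.exp_pos _
  simp only [key, deriv_add_const, deriv_const_mul_field]
  rw [abs_mul, abs_of_pos hEpos, mul_comm]
end

section
/- Johnson–Lindenstrauss for sign matrices: Let d ≥ 2, ε ∈ (0, 1/2), δ ∈ (0,1), and p ≥ (4/ε²) ln(d/δ). If M ∈ ℝ^{p×d} has i.i.d. entries uniform on {−1/√p, +1/√p}, then with probability at least 1 − δ², for all pairs i ≠ j in {1,…,d}, |⟨M e_i, M e_j⟩| ≤ ε. -/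
open MeasureTheory

/-- Entry of the random sign matrix: `±1/√p`, determined by a boolean. -/
noncomputable def signEntry (p : ℕ) (bit : Bool) : ℝ :=
  (if bit then (1:ℝ) else -1) / Real.sqrt p

section JLAuxSection
open Finset
open scoped ENNReal

namespace JLAux

open Finset
open scoped ENNReal

noncomputable def rad (b : Bool) : ℝ := if b then 1 else -1

lemma rad_not (a : Bool) : rad (!a) = - rad a := by cases a <;> simp [rad]

lemma signEntry_mul (p : ℕ) (hp : 0 < p) (a b : Bool) :
    signEntry p a * signEntry p b = rad (a == b) / p := by
  have hsq : Real.sqrt p * Real.sqrt p = (p : ℝ) :=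
    Real.mul_self_sqrt (by positivity)
  unfold signEntry rad
  rw [div_mul_div_comm, hsq]
  cases a <;> cases b <;> norm_num

lemma card_filter_equiv {α β : Type*} [Fintype α] [Fintype β] (e : α ≃ β)
    (P : β → Prop) [DecidablePred P] :
    (Finset.univ.filter fun a => P (e a)).card = (Finset.univ.filter P).card := by
  apply Finset.card_bij (fun a _ => e a)
  · intro a ha; simp only [mem_filter, mem_univ, true_and] at ha ⊢; exact ha
  · intro a _ b _ h; exact e.injective h
  · intro b hb
    refine ⟨e.symm b, ?_, by simp⟩
    simp only [mem_filter, mem_univ, true_and] at hb ⊢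
    simpa using hb

open scoped Classical in
lemma count_ge_le (p : ℕ) (s t : ℝ) (hs : 0 ≤ s) :
    ((Finset.univ.filter fun b : Fin p → Bool => t ≤ ∑ l, rad (b l)).card : ℝ)
      ≤ 2 ^ p * Real.exp ((p : ℝ) * s ^ 2 / 2 - s * t) := by
  rw [Finset.card_filter]
  push_cast
  have step1 : (∑ b : Fin p → Bool, if t ≤ ∑ l, rad (b l) then (1:ℝ) else 0)
      ≤ ∑ b : Fin p → Bool, Real.exp (-(s*t)) * ∏ l, Real.exp (s * rad (b l)) := by
    apply Finset.sum_le_sum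
    intro b _
    have : Real.exp (-(s*t)) * ∏ l, Real.exp (s * rad (b l))
        = Real.exp (s * ((∑ l, rad (b l)) - t)) := by
      rw [← Real.exp_sum, ← Real.exp_add, ← Finset.mul_sum]
      ring_nf
    rw [this]
    split_ifs with h
    · exact Real.one_le_exp (mul_nonneg hs (sub_nonneg.2 h))
    · exact (Real.exp_pos _).le
  have step2 : (∑ b : Fin p → Bool, Real.exp (-(s*t)) * ∏ l, Real.exp (s * rad (b l)))
      = Real.exp (-(s*t)) * (Real.exp s + Real.exp (-s)) ^ p := by
    rw [← Finset.mul_sum]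
    congr 1
    rw [← Fintype.piFinset_univ,
      ← Finset.prod_univ_sum (fun _ => (univ : Finset Bool)) (fun _ x => Real.exp (s * rad x))]
    simp [rad, Finset.prod_const]
  refine step1.trans (le_of_eq step2 |>.trans ?_)
  have hcosh : Real.exp s + Real.exp (-s) ≤ 2 * Real.exp (s^2/2) := by
    have := Real.cosh_le_exp_half_sq s
    rw [Real.cosh_eq] at this
    linarith
  calc Real.exp (-(s*t)) * (Real.exp s + Real.exp (-s)) ^ p
      ≤ Real.exp (-(s*t)) * (2 * Real.exp (s^2/2)) ^ p := by
        apply mul_le_mul_of_nonneg_left (pow_le_pow_left₀ (by positivity) hcosh p)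
          (Real.exp_pos _).le
    _ = 2 ^ p * Real.exp ((p : ℝ) * s ^ 2 / 2 - s * t) := by
        rw [mul_pow, ← Real.exp_nat_mul, mul_comm, mul_assoc, ← Real.exp_add]
        ring_nf

/-- splitting a matrix into column `j` and the rest -/
def colSplit (p d : ℕ) (j : Fin d) :
    (Fin p → Fin d → Bool) ≃ (Fin p → Bool) × (Fin p → {k : Fin d // k ≠ j} → Bool) where
  toFun ω := (fun l => ω l j, fun l k => ω l k.1)
  invFun x := fun l k => if h : k = j then x.1 l else x.2 l ⟨k, h⟩
  left_inv ω := by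
    funext l k
    by_cases h : k = j
    · subst h; simp
    · simp [h]
  right_inv x := by
    refine Prod.ext ?_ ?_
    · funext l; simp
    · funext l k; simp [k.2]

open scoped Classical in
lemma count_col (p d : ℕ) (_hd : 1 ≤ d) (j : Fin d) (Q : (Fin p → Bool) → Prop) :
    (Finset.univ.filter fun ω : Fin p → Fin d → Bool => Q fun l => ω l j).card
      = (Finset.univ.filter Q).card * 2 ^ (p * (d - 1)) := by
  have h := card_filter_equiv (colSplit p d j)
    (fun x : (Fin p → Bool) × (Fin p → {k : Fin d // k ≠ j} → Bool) => Q x.1)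
  have h2 : (Finset.univ.filter
      fun x : (Fin p → Bool) × (Fin p → {k : Fin d // k ≠ j} → Bool) => Q x.1)
      = (Finset.univ.filter Q) ×ˢ Finset.univ := by
    ext x; simp [Finset.mem_product]
  rw [h2, Finset.card_product, Finset.card_univ] at h
  have h3 : Fintype.card (Fin p → {k : Fin d // k ≠ j} → Bool) = 2 ^ (p * (d - 1)) := by
    rw [Fintype.card_fun, Fintype.card_fun, Fintype.card_bool]
    have : Fintype.card {k : Fin d // k ≠ j} = d - 1 := by
      simp [Fintype.card_subtype_compl]
    rw [this, ← pow_mul, Fintype.card_fin, mul_comm]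
  rw [h3] at h
  exact h

open scoped Classical in
lemma count_pair (p d : ℕ) (i j : Fin d) (hij : i ≠ j) (Q : (Fin p → Bool) → Prop) :
    (Finset.univ.filter fun ω : Fin p → Fin d → Bool => Q fun l => (ω l i == ω l j)).card
      = (Finset.univ.filter Q).card * 2 ^ (p * (d - 1)) := by
  have hT : Function.Involutive
      (fun ω : Fin p → Fin d → Bool => fun l k => if k = j then (ω l i == ω l j) else ω l k) := by
    intro ω
    funext l k
    dsimp only
    by_cases h : k = j
    · subst h
      rw [if_pos rfl, if_pos rfl, if_neg hij]
      cases ω l i <;> cases ω l k <;> rfl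
    · simp only [if_neg h]
  set e : Equiv.Perm (Fin p → Fin d → Bool) := hT.toPerm with he
  have key := card_filter_equiv e (fun ω : Fin p → Fin d → Bool => Q fun l => ω l j)
  have hpred : (Finset.univ.filter fun ω : Fin p → Fin d → Bool => Q fun l => e ω l j)
      = (Finset.univ.filter fun ω : Fin p → Fin d → Bool => Q fun l => (ω l i == ω l j)) := by
    apply Finset.filter_congr
    intro ω _
    have h1 : (fun l => e ω l j) = fun l => (ω l i == ω l j) := by
      funext l
      show (if j = j then (ω l i == ω l j) else ω l j) = _
      rw [if_pos rfl]
    rw [h1]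
  rw [hpred] at key
  rw [key, count_col p d j.pos j Q]

open scoped Classical in
lemma uniform_apply {α : Type*} [Fintype α] [Nonempty α] [MeasurableSpace α]
    [MeasurableSingletonClass α] (S : Set α) :
    (PMF.uniformOfFintype α).toMeasure S
      = ENNReal.ofReal (((Finset.univ.filter (· ∈ S)).card : ℝ) / (Fintype.card α : ℝ)) := by
  rw [PMF.toMeasure_apply_fintype]
  have h : ∀ x : α, S.indicator (⇑(PMF.uniformOfFintype α)) x
      = if x ∈ S then (Fintype.card α : ℝ≥0∞)⁻¹ else 0 := by
    intro x
    by_cases h : x ∈ S <;> simp [Set.indicator, h, PMF.uniformOfFintype_apply]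
  simp_rw [h]
  rw [← Finset.sum_filter, Finset.sum_const, nsmul_eq_mul]
  rw [ENNReal.ofReal_div_of_pos (by exact_mod_cast Fintype.card_pos)]
  rw [ENNReal.ofReal_natCast, ENNReal.ofReal_natCast, div_eq_mul_inv]

open scoped Classical in
lemma card_lt_pairs (d : ℕ) :
    ((Finset.univ.filter fun q : Fin d × Fin d => q.1 < q.2).card : ℕ) * 2 = d * d - d := by
  have hswap : (Finset.univ.filter fun q : Fin d × Fin d => q.2 < q.1).card
      = (Finset.univ.filter fun q : Fin d × Fin d => q.1 < q.2).card :=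
    card_filter_equiv (Equiv.prodComm (Fin d) (Fin d)) (fun q : Fin d × Fin d => q.1 < q.2)
  have hdisj : Disjoint (Finset.univ.filter fun q : Fin d × Fin d => q.1 < q.2)
      (Finset.univ.filter fun q : Fin d × Fin d => q.2 < q.1) := by
    rw [Finset.disjoint_left]
    intro q hq hq'
    simp only [mem_filter] at hq hq'
    exact absurd hq'.2 (not_lt_of_gt hq.2)
  have hunion : (Finset.univ.filter fun q : Fin d × Fin d => q.1 < q.2)
      ∪ (Finset.univ.filter fun q : Fin d × Fin d => q.2 < q.1)
      = (Finset.univ : Finset (Fin d)).offDiag := by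
    ext q
    simp only [Finset.mem_union, Finset.mem_filter, Finset.mem_univ, true_and,
      Finset.mem_offDiag]
    exact ⟨fun h => h.elim ne_of_lt ne_of_gt, lt_or_gt_of_ne⟩
  have := Finset.card_union_of_disjoint hdisj
  rw [hunion, Finset.offDiag_card, Finset.card_univ, Fintype.card_fin, hswap] at this
  omega

open scoped Classical in
lemma pair_count_bound (p d : ℕ) (ε : ℝ) (hε0 : 0 ≤ ε) (i j : Fin d) (hij : i ≠ j) :
    ((Finset.univ.filter fun ω : Fin p → Fin d → Bool =>
        (p : ℝ) * ε < |∑ l, rad (ω l i == ω l j)|).card : ℝ)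
      ≤ 2 ^ (p * d) * (2 * Real.exp (-((p:ℝ) * ε ^ 2) / 2)) := by
  have hcount : (Finset.univ.filter fun ω : Fin p → Fin d → Bool =>
        (p : ℝ) * ε < |∑ l, rad (ω l i == ω l j)|).card
      = (Finset.univ.filter fun b : Fin p → Bool => (p : ℝ) * ε < |∑ l, rad (b l)|).card
        * 2 ^ (p * (d - 1)) :=
    count_pair p d i j hij (fun b => (p : ℝ) * ε < |∑ l, rad (b l)|)
  -- bound the Bool-vector count
  have habs : (Finset.univ.filter fun b : Fin p → Bool => (p : ℝ) * ε < |∑ l, rad (b l)|)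
      ⊆ (Finset.univ.filter fun b : Fin p → Bool => (p : ℝ) * ε ≤ ∑ l, rad (b l))
        ∪ (Finset.univ.filter fun b : Fin p → Bool => (p : ℝ) * ε ≤ ∑ l, rad (!(b l))) := by
    intro b hb
    simp only [mem_filter, mem_univ, true_and, Finset.mem_union] at hb ⊢
    rcases lt_abs.mp hb with h | h
    · exact Or.inl h.le
    · refine Or.inr ?_
      have : ∑ l, rad (!(b l)) = - ∑ l, rad (b l) := by
        simp [rad_not]
      rw [this]
      linarith
  have hneg : (Finset.univ.filter fun b : Fin p → Bool =>
        (p : ℝ) * ε ≤ ∑ l, rad (!(b l))).card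
      = (Finset.univ.filter fun b : Fin p → Bool => (p : ℝ) * ε ≤ ∑ l, rad (b l)).card := by
    have hInv : Function.Involutive (fun b : Fin p → Bool => fun l => !(b l)) := by
      intro b; funext l; simp
    exact card_filter_equiv hInv.toPerm
      (fun b : Fin p → Bool => (p : ℝ) * ε ≤ ∑ l, rad (b l))
  have hone : ((Finset.univ.filter fun b : Fin p → Bool =>
        (p : ℝ) * ε ≤ ∑ l, rad (b l)).card : ℝ)
      ≤ 2 ^ p * Real.exp (-((p:ℝ) * ε ^ 2) / 2) := by
    have := count_ge_le p ε ((p : ℝ) * ε) hε0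
    have harith : (p : ℝ) * ε ^ 2 / 2 - ε * ((p:ℝ) * ε) = -((p:ℝ) * ε ^ 2) / 2 := by ring
    rwa [harith] at this
  have hcard2 : ((Finset.univ.filter fun b : Fin p → Bool =>
        (p : ℝ) * ε < |∑ l, rad (b l)|).card : ℝ)
      ≤ 2 * (2 ^ p * Real.exp (-((p:ℝ) * ε ^ 2) / 2)) := by
    have h1 : (Finset.univ.filter fun b : Fin p → Bool => (p : ℝ) * ε < |∑ l, rad (b l)|).card
        ≤ (Finset.univ.filter fun b : Fin p → Bool => (p : ℝ) * ε ≤ ∑ l, rad (b l)).card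
          + (Finset.univ.filter fun b : Fin p → Bool => (p : ℝ) * ε ≤ ∑ l, rad (!(b l))).card :=
      (Finset.card_le_card habs).trans (Finset.card_union_le _ _)
    rw [hneg] at h1
    have h3 := (Nat.cast_le (α := ℝ)).2 h1
    push_cast at h3
    linarith
  -- combine
  rw [hcount]
  push_cast
  have hd1 : 0 < d := j.pos
  have hexp : p * (d - 1) + p = p * d := by
    conv_rhs => rw [← Nat.sub_add_cancel hd1]
    rw [Nat.mul_succ]
  have hpow : (2:ℝ) ^ (p * (d - 1)) * 2 ^ p = 2 ^ (p * d) := by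
    rw [← pow_add, hexp]
  calc ((Finset.univ.filter fun b : Fin p → Bool =>
        (p : ℝ) * ε < |∑ l, rad (b l)|).card : ℝ) * 2 ^ (p * (d - 1))
      ≤ 2 * (2 ^ p * Real.exp (-((p:ℝ) * ε ^ 2) / 2)) * 2 ^ (p * (d - 1)) := by
        apply mul_le_mul_of_nonneg_right hcard2 (by positivity)
    _ = 2 ^ (p * d) * (2 * Real.exp (-((p:ℝ) * ε ^ 2) / 2)) := by
        rw [← hpow]; ring

end JLAux

end JLAuxSection

open Finset in
open JLAux in
open scoped Classical in
theorem stmt12 (d p : ℕ) (hd : 2 ≤ d) (ε δ : ℝ) (hε : ε ∈ Set.Ioo (0:ℝ) (1/2))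
    (hδ : δ ∈ Set.Ioo (0:ℝ) 1) (hp : (4 / ε^2) * Real.log (d / δ) ≤ p) :
    ENNReal.ofReal (1 - δ^2) ≤
      (PMF.uniformOfFintype (Fin p → Fin d → Bool)).toMeasure
        {ω | ∀ i j : Fin d, i ≠ j →
          |∑ l : Fin p, signEntry p (ω l i) * signEntry p (ω l j)| ≤ ε} := by
  obtain ⟨hε0, hε2⟩ := hε
  obtain ⟨hδ0, hδ1⟩ := hδ
  set μ := (PMF.uniformOfFintype (Fin p → Fin d → Bool)).toMeasure with hμ
  set E : Set (Fin p → Fin d → Bool) := {ω | ∀ i j : Fin d, i ≠ j →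
    |∑ l : Fin p, signEntry p (ω l i) * signEntry p (ω l j)| ≤ ε} with hEdef
  -- basic positivity facts
  have hdpos : (0:ℝ) < d := by
    have : (2:ℝ) ≤ d := by exact_mod_cast hd
    linarith
  have hdδpos : (0:ℝ) < (d:ℝ) / δ := by positivity
  have hdδ1 : (1:ℝ) < (d:ℝ) / δ := by
    rw [lt_div_iff₀ hδ0]
    have : (2:ℝ) ≤ d := by exact_mod_cast hd
    linarith
  have hL : 0 < Real.log ((d:ℝ) / δ) := Real.log_pos hdδ1
  have hppos : 0 < p := by
    by_contra h
    push_neg at h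
    interval_cases p
    have : (0:ℝ) < (4 / ε^2) * Real.log ((d:ℝ) / δ) := by positivity
    simp at hp
    linarith
  have hpR : (0:ℝ) < p := by exact_mod_cast hppos
  -- exponential bound
  have hexp_le : Real.exp (-((p:ℝ) * ε ^ 2) / 2) ≤ (δ / d)^2 := by
    have hε2ne : ε^2 ≠ 0 := by positivity
    have h2L : 2 * Real.log ((d:ℝ)/δ) ≤ (p:ℝ) * ε^2 / 2 := by
      calc 2 * Real.log ((d:ℝ)/δ)
          = (4 / ε^2) * Real.log ((d:ℝ)/δ) * (ε^2 / 2) := by field_simp; ring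
        _ ≤ (p:ℝ) * (ε^2 / 2) := mul_le_mul_of_nonneg_right hp (by positivity)
        _ = (p:ℝ) * ε^2 / 2 := by ring
    have h1 : Real.exp (-((p:ℝ) * ε ^ 2) / 2) ≤ Real.exp (-(2 * Real.log ((d:ℝ)/δ))) :=
      Real.exp_le_exp.2 (by linarith)
    have h2 : Real.exp (-(2 * Real.log ((d:ℝ)/δ))) = (δ/d)^2 := by
      rw [show -(2 * Real.log ((d:ℝ)/δ)) = -Real.log ((d:ℝ)/δ) + -Real.log ((d:ℝ)/δ) by ring,
        Real.exp_add, Real.exp_neg, Real.exp_log hdδpos, inv_div]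
      ring
    linarith [h1, h2.le, h2.ge]
  -- the per-pair bad events
  set A : Fin d × Fin d → Set (Fin p → Fin d → Bool) :=
    fun q => {ω | (p:ℝ) * ε < |∑ l, rad (ω l q.1 == ω l q.2)|} with hAdef
  set PS : Finset (Fin d × Fin d) := Finset.univ.filter (fun q => q.1 < q.2) with hPS
  -- complement is covered by the union of bad events over pairs
  have hsum_eq : ∀ (ω : Fin p → Fin d → Bool) (i j : Fin d),
      (∑ l, signEntry p (ω l i) * signEntry p (ω l j))
        = (∑ l, rad (ω l i == ω l j)) / p := by
    intro ω i j
    rw [Finset.sum_div]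
    exact Finset.sum_congr rfl fun l _ => signEntry_mul p hppos _ _
  have habs_iff : ∀ (x : ℝ), ε < |x / p| ↔ (p:ℝ) * ε < |x| := by
    intro x
    rw [abs_div, abs_of_pos hpR, lt_div_iff₀ hpR, mul_comm]
  have hsub : Eᶜ ⊆ ⋃ q ∈ PS, A q := by
    intro ω hω
    simp only [hEdef, Set.mem_compl_iff, Set.mem_setOf_eq, not_forall] at hω
    obtain ⟨i, j, hij, hgt⟩ := hω
    push_neg at hgt
    rw [hsum_eq ω i j, habs_iff] at hgt
    have hcomm : ∀ l, (ω l j == ω l i) = (ω l i == ω l j) := by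
      intro l; cases ω l i <;> cases ω l j <;> rfl
    rcases lt_or_gt_of_ne hij with h | h
    · exact Set.mem_biUnion (show (i, j) ∈ PS from Finset.mem_filter.mpr ⟨Finset.mem_univ _, h⟩)
        (show ω ∈ A (i, j) from hgt)
    · exact Set.mem_biUnion (show (j, i) ∈ PS from Finset.mem_filter.mpr ⟨Finset.mem_univ _, h⟩)
        (show ω ∈ A (j, i) from show (p:ℝ) * ε < |∑ l, rad (ω l j == ω l i)| by
          simp only [hcomm]; exact hgt)
  -- measure of each bad event
  have hcardΩn : Fintype.card (Fin p → Fin d → Bool) = 2 ^ (p * d) := by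
    rw [Fintype.card_fun, Fintype.card_fun, Fintype.card_bool, Fintype.card_fin, Fintype.card_fin,
      ← pow_mul, mul_comm]
  have hcardΩ : (Fintype.card (Fin p → Fin d → Bool) : ℝ) = 2 ^ (p * d) := by
    rw [hcardΩn]
    push_cast
    ring
  have hA_le : ∀ q ∈ PS, μ (A q) ≤ ENNReal.ofReal (2 * Real.exp (-((p:ℝ) * ε ^ 2) / 2)) := by
    intro q hq
    have hqne : q.1 ≠ q.2 := by
      have : q.1 < q.2 := by simpa [hPS] using hq
      exact ne_of_lt this
    rw [hμ, uniform_apply]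
    apply ENNReal.ofReal_le_ofReal
    rw [div_le_iff₀ (by rw [hcardΩ]; positivity), hcardΩ]
    have hb := pair_count_bound p d ε hε0.le q.1 q.2 hqne
    calc ((Finset.univ.filter (· ∈ A q)).card : ℝ)
        = ((Finset.univ.filter fun ω : Fin p → Fin d → Bool =>
            (p : ℝ) * ε < |∑ l, rad (ω l q.1 == ω l q.2)|).card : ℝ) := by rfl
      _ ≤ 2 ^ (p * d) * (2 * Real.exp (-((p:ℝ) * ε ^ 2) / 2)) := hb
      _ = 2 * Real.exp (-((p:ℝ) * ε ^ 2) / 2) * 2 ^ (p * d) := by ring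
  -- union bound
  have hEc : μ Eᶜ ≤ ENNReal.ofReal (δ^2) := by
    have h1 : μ Eᶜ ≤ ∑ q ∈ PS, μ (A q) :=
      (measure_mono hsub).trans (measure_biUnion_finset_le PS A)
    have h2 : ∑ q ∈ PS, μ (A q)
        ≤ ∑ q ∈ PS, ENNReal.ofReal (2 * Real.exp (-((p:ℝ) * ε ^ 2) / 2)) :=
      Finset.sum_le_sum hA_le
    have h3 : ∑ q ∈ PS, ENNReal.ofReal (2 * Real.exp (-((p:ℝ) * ε ^ 2) / 2))
        = ENNReal.ofReal ((PS.card : ℝ) * (2 * Real.exp (-((p:ℝ) * ε ^ 2) / 2))) := by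
      rw [Finset.sum_const, nsmul_eq_mul, ← ENNReal.ofReal_natCast PS.card,
        ← ENNReal.ofReal_mul (by positivity)]
    have h4 : (PS.card : ℝ) * (2 * Real.exp (-((p:ℝ) * ε ^ 2) / 2)) ≤ δ^2 := by
      have hcard : (PS.card : ℝ) * 2 = (d:ℝ) * d - d := by
        have hn := card_lt_pairs d
        have hle : d ≤ d * d := Nat.le_mul_of_pos_left d (by omega)
        have : ((PS.card * 2 : ℕ) : ℝ) = ((d * d - d : ℕ) : ℝ) := by exact_mod_cast hn
        rw [Nat.cast_sub hle] at this
        push_cast at this ⊢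
        linarith
      have hstep : (PS.card : ℝ) * (2 * Real.exp (-((p:ℝ) * ε ^ 2) / 2))
          ≤ (PS.card : ℝ) * (2 * (δ/d)^2) := by
        apply mul_le_mul_of_nonneg_left _ (Nat.cast_nonneg _)
        nlinarith [Real.exp_pos (-((p:ℝ) * ε ^ 2) / 2)]
      have hfin : (PS.card : ℝ) * (2 * (δ/d)^2) ≤ δ^2 := by
        have h5 : (PS.card : ℝ) * (2 * (δ/d)^2) = ((d:ℝ) * d - d) * (δ/d)^2 := by
          rw [← hcard]; ring
        have h6 : ((d:ℝ) * d - d) * (δ/d)^2 ≤ ((d:ℝ) * d) * (δ/d)^2 :=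
          mul_le_mul_of_nonneg_right (by linarith) (by positivity)
        have h7 : ((d:ℝ) * d) * (δ/d)^2 = δ^2 := by
          field_simp
        linarith
      linarith
    calc μ Eᶜ ≤ ∑ q ∈ PS, μ (A q) := h1
      _ ≤ _ := h2
      _ = _ := h3
      _ ≤ ENNReal.ofReal (δ^2) := ENNReal.ofReal_le_ofReal h4
  -- conclude
  have hEmeas : MeasurableSet E := (Set.toFinite E).measurableSet
  have hcompl : μ E = 1 - μ Eᶜ := by
    have := prob_compl_eq_one_sub (μ := μ) hEmeas.compl
    rwa [compl_compl] at this
  rw [hcompl]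
  calc ENNReal.ofReal (1 - δ^2) = ENNReal.ofReal 1 - ENNReal.ofReal (δ^2) :=
        ENNReal.ofReal_sub 1 (by positivity)
    _ = 1 - ENNReal.ofReal (δ^2) := by rw [ENNReal.ofReal_one]
    _ ≤ 1 - μ Eᶜ := tsub_le_tsub_left hEc 1
end

section
/- There exists a projection matrix M: ℝ^d → ℝ^p with p = O(ε^{−2} log d) and entries in {±1/√p} such that |⟨M e_i, M e_j⟩| ≤ ε for all i ≠ j, and moreover ⟨M e_i, M e_i⟩ = 1 for every i. -/
open Finset Real

namespace Stmt14Aux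

noncomputable def sg (b : Bool) : ℝ := if b then 1 else -1

lemma sg_sq (b : Bool) : sg b * sg b = 1 := by cases b <;> simp [sg]

lemma sg_mul (a b : Bool) : sg a * sg b = sg (a == b) := by
  cases a <;> cases b <;> norm_num [sg]

lemma beq_beq (a b : Bool) : ((a == b) == b) = a := by revert a b; decide

lemma sum_exp (p : ℕ) (c : ℝ) :
    ∑ s : Fin p → Bool, Real.exp (c * ∑ l, sg (s l))
      = (Real.exp c + Real.exp (-c)) ^ p := by
  have h : ∀ s : Fin p → Bool,
      Real.exp (c * ∑ l, sg (s l)) = ∏ l, Real.exp (c * sg (s l)) := by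
    intro s
    rw [Finset.mul_sum, Real.exp_sum]
  simp_rw [h]
  have h2 := Finset.prod_univ_sum (t := fun _ : Fin p => (Finset.univ : Finset Bool))
      (f := fun _ b => Real.exp (c * sg b))
  rw [Fintype.piFinset_univ] at h2
  rw [← h2]
  have h3 : (∑ b : Bool, Real.exp (c * sg b)) = Real.exp c + Real.exp (-c) := by
    simp [sg, Fintype.sum_bool, add_comm, mul_comm]
  rw [show (∑ b : Bool, Real.exp (c * sg b)) = Real.exp (c * sg true) + Real.exp (c * sg false) by rw [Fintype.sum_bool]] at h3
  rw [Finset.prod_const, Finset.card_univ, Fintype.card_fin, Fintype.sum_bool, h3]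

lemma chernoff (p : ℕ) (t : ℝ) (ht : 0 ≤ t) :
    ((Finset.univ.filter
        (fun s : Fin p → Bool => t * p < |∑ l, sg (s l)|)).card : ℝ)
      ≤ 2 * Real.exp (-(t ^ 2) * p / 2) * 2 ^ p := by
  classical
  set F : (Fin p → Bool) → ℝ := fun s =>
    Real.exp (t * (∑ l, sg (s l)) - t ^ 2 * p)
      + Real.exp (-(t * (∑ l, sg (s l))) - t ^ 2 * p) with hF
  have key : ∀ s ∈ Finset.univ.filter
      (fun s : Fin p → Bool => t * p < |∑ l, sg (s l)|), (1 : ℝ) ≤ F s := by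
    intro s hs
    rw [Finset.mem_filter] at hs
    rcases lt_abs.mp hs.2 with h | h
    · have h1 : (1 : ℝ) ≤ Real.exp (t * (∑ l, sg (s l)) - t ^ 2 * p) :=
        Real.one_le_exp (by nlinarith)
      have h2 := Real.exp_pos (-(t * (∑ l, sg (s l))) - t ^ 2 * p)
      simp only [hF]; linarith
    · have h1 : (1 : ℝ) ≤ Real.exp (-(t * (∑ l, sg (s l))) - t ^ 2 * p) :=
        Real.one_le_exp (by nlinarith)
      have h2 := Real.exp_pos (t * (∑ l, sg (s l)) - t ^ 2 * p)
      simp only [hF]; linarith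
  have hcard : ((Finset.univ.filter
      (fun s : Fin p → Bool => t * p < |∑ l, sg (s l)|)).card : ℝ)
      ≤ ∑ s : Fin p → Bool, F s := by
    calc ((Finset.univ.filter _).card : ℝ)
        = ∑ s ∈ Finset.univ.filter
            (fun s : Fin p → Bool => t * p < |∑ l, sg (s l)|), (1:ℝ) := by
          simp
      _ ≤ ∑ s ∈ Finset.univ.filter
            (fun s : Fin p → Bool => t * p < |∑ l, sg (s l)|), F s :=
          Finset.sum_le_sum key
      _ ≤ ∑ s : Fin p → Bool, F s := by
          apply Finset.sum_le_sum_of_subset_of_nonneg (Finset.filter_subset _ _)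
          intro s _ _
          positivity
  have hsum : ∑ s : Fin p → Bool, F s
      = 2 * Real.exp (-(t ^ 2 * p)) * (Real.exp t + Real.exp (-t)) ^ p := by
    have e1 : ∀ s : Fin p → Bool,
        Real.exp (t * (∑ l, sg (s l)) - t ^ 2 * p)
          = Real.exp (t * (∑ l, sg (s l))) * Real.exp (-(t ^ 2 * p)) := by
      intro s; rw [← Real.exp_add]; ring_nf
    have e2 : ∀ s : Fin p → Bool,
        Real.exp (-(t * (∑ l, sg (s l))) - t ^ 2 * p)
          = Real.exp ((-t) * (∑ l, sg (s l))) * Real.exp (-(t ^ 2 * p)) := by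
      intro s; rw [← Real.exp_add]; ring_nf
    simp only [hF]
    rw [Finset.sum_add_distrib]
    simp_rw [e1, e2]
    rw [← Finset.sum_mul, ← Finset.sum_mul, sum_exp, sum_exp, neg_neg]
    ring
  have hcosh : (Real.exp t + Real.exp (-t)) ^ p
      ≤ 2 ^ p * Real.exp (t ^ 2 * p / 2) := by
    have h1 : Real.exp t + Real.exp (-t) ≤ 2 * Real.exp (t ^ 2 / 2) := by
      have := Real.cosh_le_exp_half_sq t
      rw [Real.cosh_eq] at this
      linarith
    calc (Real.exp t + Real.exp (-t)) ^ p
        ≤ (2 * Real.exp (t ^ 2 / 2)) ^ p := by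
          apply pow_le_pow_left₀ (by positivity) h1
      _ = 2 ^ p * Real.exp (t ^ 2 / 2) ^ p := by rw [mul_pow]
      _ = 2 ^ p * Real.exp (t ^ 2 * p / 2) := by
          rw [← Real.exp_nat_mul]; ring_nf
  calc ((Finset.univ.filter _).card : ℝ)
      ≤ 2 * Real.exp (-(t ^ 2 * p)) * (Real.exp t + Real.exp (-t)) ^ p := by
        rw [← hsum]; exact hcard
    _ ≤ 2 * Real.exp (-(t ^ 2 * p)) * (2 ^ p * Real.exp (t ^ 2 * p / 2)) := by
        apply mul_le_mul_of_nonneg_left hcosh (by positivity)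
    _ = 2 * (Real.exp (-(t ^ 2 * p)) * Real.exp (t ^ 2 * p / 2)) * 2 ^ p := by ring
    _ = 2 * Real.exp (-(t ^ 2) * p / 2) * 2 ^ p := by
        rw [← Real.exp_add]; ring_nf


lemma pairCount (p d : ℕ) (i j : Fin d) (hij : j ≠ i)
    (P : (Fin p → Bool) → Prop) [DecidablePred P] :
    (Finset.univ.filter
        (fun s : Fin d → Fin p → Bool => P (fun l => s i l == s j l))).card
      = (Finset.univ.filter P).card * (2 ^ p) ^ (d - 1) := by
  classical
  rw [← Fintype.card_subtype, ← Fintype.card_subtype]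
  have e : {s : Fin d → Fin p → Bool // P (fun l => s i l == s j l)} ≃
      {v : Fin p → Bool // P v} × ({k : Fin d // k ≠ i} → (Fin p → Bool)) := by
    refine ⟨fun s => (⟨fun l => s.1 i l == s.1 j l, s.2⟩, fun k => s.1 k.1),
      fun x => ⟨fun k => if h : k = i then (fun l => x.1.1 l == x.2 ⟨j, hij⟩ l)
        else x.2 ⟨k, h⟩, ?_⟩, ?_, ?_⟩
    · convert x.1.2 using 2
      simp [hij, beq_beq]
    · intro s
      apply Subtype.ext
      funext k l
      by_cases h : k = i
      · subst h
        simp only [dif_pos rfl]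
        exact beq_beq _ _
      · simp only [dif_neg h]
    · intro x
      refine Prod.ext (Subtype.ext ?_) ?_
      · funext l
        simp only [dif_pos rfl, dif_neg hij]
        exact beq_beq _ _
      · funext k
        simp only [dif_neg k.2]
  rw [Fintype.card_congr e, Fintype.card_prod, Fintype.card_fun]
  congr 2
  · simp
  · rw [Fintype.card_subtype_compl, Fintype.card_subtype_eq, Fintype.card_fin]

end Stmt14Aux


open Stmt14Aux

theorem stmt14 :
    ∃ C > 0, ∀ d : ℕ, 2 ≤ d → ∀ ε : ℝ, ε ∈ Set.Ioo (0:ℝ) (1/2) →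
      ∃ p : ℕ, 0 < p ∧ (p:ℝ) ≤ C * ε⁻¹^2 * Real.log d ∧
        ∃ M : Fin p → Fin d → ℝ,
          (∀ l i, M l i = 1 / Real.sqrt p ∨ M l i = -(1 / Real.sqrt p)) ∧
          (∀ i j : Fin d, i ≠ j → |∑ l : Fin p, M l i * M l j| ≤ ε) ∧
          (∀ i : Fin d, ∑ l : Fin p, M l i * M l i = 1) := by
  classical
  refine ⟨9, by norm_num, ?_⟩
  intro d hd ε hε
  obtain ⟨hε0, hε2⟩ := hε
  set p : ℕ := ⌈8 * ε⁻¹ ^ 2 * Real.log d⌉₊ with hp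
  have hd0 : (0:ℝ) < d := by positivity
  have hd2 : (2:ℝ) ≤ d := by exact_mod_cast hd
  have hlog2 : (0.6931471803 : ℝ) < Real.log 2 := Real.log_two_gt_d9
  have hlogd : Real.log 2 ≤ Real.log d := Real.log_le_log (by norm_num) hd2
  have hεinv : 2 < ε⁻¹ := by
    have := inv_strictAnti₀ hε0 hε2
    norm_num at this
    linarith
  have hεinv2 : 4 < ε⁻¹ ^ 2 := by nlinarith
  have hεε : ε * ε⁻¹ = 1 := mul_inv_cancel₀ hε0.ne'
  have hx : (8:ℝ) ≤ 8 * ε⁻¹ ^ 2 * Real.log d := by nlinarith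
  have hx0 : (0:ℝ) < 8 * ε⁻¹ ^ 2 * Real.log d := by linarith
  have hp0 : 0 < p := Nat.ceil_pos.mpr hx0
  have hp0R : (0:ℝ) < p := by exact_mod_cast hp0
  have hpge : 8 * ε⁻¹ ^ 2 * Real.log d ≤ (p:ℝ) := Nat.le_ceil _
  have hple : (p:ℝ) ≤ 9 * ε⁻¹ ^ 2 * Real.log d := by
    have h1 : (p:ℝ) < 8 * ε⁻¹ ^ 2 * Real.log d + 1 := Nat.ceil_lt_add_one hx0.le
    nlinarith
  refine ⟨p, hp0, hple, ?_⟩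
  -- counting argument
  set Bad : Finset (Fin p → Bool) :=
    Finset.univ.filter (fun v => ε * p < |∑ l, sg (v l)|) with hBad
  set BadM : Finset (Fin d → Fin p → Bool) :=
    Finset.univ.filter (fun s => ∃ i j : Fin d, i ≠ j ∧
      ε * p < |∑ l, sg (s i l) * sg (s j l)|) with hBadM
  have hsub : BadM ⊆ (Finset.univ : Finset (Fin d)).offDiag.biUnion (fun q =>
      Finset.univ.filter (fun s : Fin d → Fin p → Bool =>
        ε * p < |∑ l, sg (s q.1 l) * sg (s q.2 l)|)) := by
    intro s hs
    rw [hBadM, Finset.mem_filter] at hs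
    obtain ⟨-, i, j, hij, h⟩ := hs
    exact Finset.mem_biUnion.mpr ⟨(i, j),
      Finset.mem_offDiag.mpr ⟨Finset.mem_univ _, Finset.mem_univ _, hij⟩,
      Finset.mem_filter.mpr ⟨Finset.mem_univ _, h⟩⟩
  have hpair : ∀ q ∈ (Finset.univ : Finset (Fin d)).offDiag,
      (Finset.univ.filter (fun s : Fin d → Fin p → Bool =>
        ε * p < |∑ l, sg (s q.1 l) * sg (s q.2 l)|)).card
        = Bad.card * (2 ^ p) ^ (d - 1) := by
    intro q hq
    have hij : q.2 ≠ q.1 := ((Finset.mem_offDiag.mp hq).2.2).symm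
    have hsg : ∀ s : Fin d → Fin p → Bool,
        (∑ l, sg (s q.1 l) * sg (s q.2 l)) = ∑ l, sg (s q.1 l == s q.2 l) :=
      fun s => Finset.sum_congr rfl (fun l _ => sg_mul _ _)
    simp_rw [hsg]
    exact pairCount p d q.1 q.2 hij (fun v => ε * p < |∑ l, sg (v l)|)
  have hcount : BadM.card ≤ (d * d - d) * (Bad.card * (2 ^ p) ^ (d - 1)) := by
    calc BadM.card
        ≤ ∑ q ∈ (Finset.univ : Finset (Fin d)).offDiag,
            (Finset.univ.filter (fun s : Fin d → Fin p → Bool =>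
              ε * p < |∑ l, sg (s q.1 l) * sg (s q.2 l)|)).card :=
          le_trans (Finset.card_le_card hsub) (Finset.card_biUnion_le)
      _ = (Finset.univ : Finset (Fin d)).offDiag.card
            * (Bad.card * (2 ^ p) ^ (d - 1)) := by
          rw [Finset.sum_congr rfl hpair, Finset.sum_const, smul_eq_mul]
      _ = (d * d - d) * (Bad.card * (2 ^ p) ^ (d - 1)) := by
          rw [Finset.offDiag_card, Finset.card_univ, Fintype.card_fin]
  have hchern : (Bad.card : ℝ) ≤ 2 * Real.exp (-(ε ^ 2) * p / 2) * 2 ^ p :=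
    chernoff p ε hε0.le
  have hexp : Real.exp (-(ε ^ 2) * p / 2) ≤ ((d:ℝ) ^ 4)⁻¹ := by
    have h1 : 8 * Real.log d ≤ ε ^ 2 * p := by
      have h2 : ε ^ 2 * (8 * ε⁻¹ ^ 2 * Real.log d) ≤ ε ^ 2 * p :=
        mul_le_mul_of_nonneg_left hpge (by positivity)
      have h3 : ε ^ 2 * (8 * ε⁻¹ ^ 2 * Real.log d) = 8 * Real.log d := by
        field_simp
      linarith
    have h4 : -(ε ^ 2) * p / 2 ≤ -(4 * Real.log d) := by linarith
    calc Real.exp (-(ε ^ 2) * p / 2) ≤ Real.exp (-(4 * Real.log d)) :=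
          Real.exp_le_exp.mpr h4
      _ = ((d:ℝ) ^ 4)⁻¹ := by
          rw [Real.exp_neg, show (4:ℝ) * Real.log d = (4:ℕ) * Real.log d by norm_num,
            Real.exp_nat_mul, Real.exp_log hd0]
  have hkey : (d:ℝ) ^ 2 * (2 * Real.exp (-(ε ^ 2) * p / 2)) < 1 := by
    have h5 : (d:ℝ) ^ 2 * (2 * Real.exp (-(ε ^ 2) * p / 2))
        ≤ (d:ℝ) ^ 2 * (2 * ((d:ℝ) ^ 4)⁻¹) := by
      apply mul_le_mul_of_nonneg_left _ (by positivity)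
      linarith
    have h6 : (d:ℝ) ^ 2 * (2 * ((d:ℝ) ^ 4)⁻¹) < 1 := by
      have he : (d:ℝ) ^ 2 * (2 * ((d:ℝ) ^ 4)⁻¹) = 2 / (d:ℝ) ^ 2 := by
        field_simp
      rw [he, div_lt_one (by positivity)]
      nlinarith
    linarith
  have hcardlt : BadM.card < Fintype.card (Fin d → Fin p → Bool) := by
    have hcardfun : Fintype.card (Fin d → Fin p → Bool) = (2 ^ p) ^ d := by
      simp [Fintype.card_fun]
    rw [hcardfun]
    have hApos : (0:ℝ) < ((2:ℝ) ^ p) ^ (d - 1) := by positivity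
    have hpowsplit : ((2:ℝ) ^ p) ^ (d - 1) * 2 ^ p = ((2:ℝ) ^ p) ^ d := by
      rw [← pow_succ, Nat.sub_add_cancel (by omega)]
    have hcount2 : BadM.card ≤ d * d * (Bad.card * (2 ^ p) ^ (d - 1)) :=
      le_trans hcount (Nat.mul_le_mul_right _ (Nat.sub_le _ _))
    have step1 : (BadM.card : ℝ)
        ≤ (d:ℝ) ^ 2 * ((Bad.card : ℝ) * ((2:ℝ) ^ p) ^ (d - 1)) := by
      calc (BadM.card : ℝ)
          ≤ ((d * d * (Bad.card * (2 ^ p) ^ (d - 1)) : ℕ) : ℝ) := by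
            exact_mod_cast hcount2
        _ = (d:ℝ) ^ 2 * ((Bad.card : ℝ) * ((2:ℝ) ^ p) ^ (d - 1)) := by
            push_cast; ring
    have step2 : (d:ℝ) ^ 2 * ((Bad.card : ℝ) * ((2:ℝ) ^ p) ^ (d - 1))
        ≤ (d:ℝ) ^ 2 * ((2 * Real.exp (-(ε ^ 2) * p / 2) * 2 ^ p)
            * ((2:ℝ) ^ p) ^ (d - 1)) :=
      mul_le_mul_of_nonneg_left
        (mul_le_mul_of_nonneg_right hchern hApos.le) (by positivity)
    have step3 : (d:ℝ) ^ 2 * ((2 * Real.exp (-(ε ^ 2) * p / 2) * 2 ^ p)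
            * ((2:ℝ) ^ p) ^ (d - 1))
        = ((d:ℝ) ^ 2 * (2 * Real.exp (-(ε ^ 2) * p / 2)))
            * (((2:ℝ) ^ p) ^ (d - 1) * 2 ^ p) := by ring
    have step4 : ((d:ℝ) ^ 2 * (2 * Real.exp (-(ε ^ 2) * p / 2)))
            * (((2:ℝ) ^ p) ^ (d - 1) * 2 ^ p)
        < 1 * (((2:ℝ) ^ p) ^ (d - 1) * 2 ^ p) :=
      mul_lt_mul_of_pos_right hkey (by positivity)
    have hRle : (BadM.card : ℝ) < ((2:ℝ) ^ p) ^ d := by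
      rw [← hpowsplit, ← one_mul (((2:ℝ) ^ p) ^ (d - 1) * 2 ^ p)]
      calc (BadM.card : ℝ) ≤ _ := step1
        _ ≤ _ := step2
        _ = _ := step3
        _ < _ := step4
    exact_mod_cast hRle
  obtain ⟨s, hs⟩ : ∃ s : Fin d → Fin p → Bool, s ∉ BadM := by
    by_contra h
    push_neg at h
    have h1 : (Finset.univ : Finset (Fin d → Fin p → Bool)) ⊆ BadM :=
      fun s _ => h s
    have h2 := Finset.card_le_card h1
    rw [Finset.card_univ] at h2
    omega
  have hgood : ∀ i j : Fin d, i ≠ j →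
      |∑ l, sg (s i l) * sg (s j l)| ≤ ε * p := by
    intro i j hij
    by_contra h
    push_neg at h
    exact hs (Finset.mem_filter.mpr ⟨Finset.mem_univ _, i, j, hij, h⟩)
  refine ⟨fun l i => sg (s i l) / Real.sqrt p, ?_, ?_, ?_⟩
  · intro l i
    cases h : s i l
    · right; simp [sg, h, neg_div]
    · left; simp [sg, h]
  all_goals
    have hsp : Real.sqrt p * Real.sqrt p = p := Real.mul_self_sqrt hp0R.le
    have hmul : ∀ (a b : Bool),
        sg a / Real.sqrt p * (sg b / Real.sqrt p) = sg a * sg b / p := by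
      intro a b
      rw [div_mul_div_comm, hsp]
  · intro i j hij
    simp_rw [hmul, ← Finset.sum_div]
    rw [abs_div, abs_of_pos hp0R, div_le_iff₀ hp0R]
    exact hgood i j hij
  · intro i
    simp_rw [hmul, sg_sq]
    rw [Finset.sum_const, Finset.card_univ, Fintype.card_fin, nsmul_eq_mul,
      mul_one_div, div_self hp0R.ne']
end
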